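/- arXiv:2208.11861 — 5 statements merged into one kernel-verified Lean document; each statement's English description precedes it below -/
import Mathlib

section
/- The second derivative at t = 0 of the Kullback–Leibler divergence t ↦ D_KL(μ ‖ μ + tτ) equals the Fisher metric G_μ(τ,τ), i.e., d²/dt²|_{t=0} [−∫_M log(d(μ+tτ)/dμ) dμ] = ∫_M (dτ/dμ)² dμ. -/
open MeasureTheory Real Filter Topology

/-!
Writing `g = h / f`, the integrand is `log (1 + t g) · f`. Since `g` is bounded, `1 + t g ≥ 1/2`
uniformly for small `t`, so both `t`-derivatives of the integrand, `g / (1 + t g) · f` and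
`-g² / (1 + t g)² · f`, are dominated by multiples of `f` and may be taken under the integral.
At `t = 0` the second one is `-g² f`.
-/

theorem abs_log_one_add_le_one {s : ℝ} (hs : |s| < 1 / 2) : |log (1 + s)| ≤ 1 := by
  obtain ⟨hs₁, hs₂⟩ := abs_lt.1 hs
  have hpos : 0 < 1 + s := by linarith
  refine abs_le.2 ⟨?_, by linarith [log_le_sub_one_of_pos hpos]⟩
  have hinv : (1 + s)⁻¹ ≤ 2 := by rw [inv_le_comm₀ hpos two_pos]; linarith
  linarith [one_sub_inv_le_log_of_pos hpos]

theorem abs_inv_one_add_le_two {s : ℝ} (hs : |s| < 1 / 2) : |(1 + s)⁻¹| ≤ 2 := by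
  have hpos : 1 / 2 < 1 + s := by linarith [neg_abs_le s]
  rw [abs_inv, abs_of_pos (by linarith), inv_le_comm₀ (by linarith) two_pos]
  linarith

theorem abs_neg_inv_one_add_sq_le_four {s : ℝ} (hs : |s| < 1 / 2) :
    |-((1 + s) ^ 2)⁻¹| ≤ 4 := by
  rw [abs_neg, ← inv_pow, abs_pow, show (4 : ℝ) = 2 ^ 2 by norm_num]
  exact pow_le_pow_left₀ (abs_nonneg _) (abs_inv_one_add_le_two hs) 2

theorem hasDerivAt_log_one_add {s : ℝ} (hs : -1 < s) :
    HasDerivAt (fun s => log (1 + s)) (1 + s)⁻¹ s := by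
  simpa using ((hasDerivAt_id s).const_add 1).log (by simp; linarith)

theorem hasDerivAt_inv_one_add {s : ℝ} (hs : -1 < s) :
    HasDerivAt (fun s => (1 + s)⁻¹) (-((1 + s) ^ 2)⁻¹) s := by
  simpa [Function.comp_def] using
    (hasDerivAt_inv (by linarith : 1 + s ≠ 0)).comp s ((hasDerivAt_id s).const_add 1)

theorem deriv_deriv_eq_of_eventually_hasDerivAt {𝕜 F : Type*} [NontriviallyNormedField 𝕜]
    [NormedAddCommGroup F] [NormedSpace 𝕜 F] {f f' : 𝕜 → F} {f'' : F} {x : 𝕜}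
    (hf : ∀ᶠ y in 𝓝 x, HasDerivAt f (f' y) y) (hf' : HasDerivAt f' f'' x) :
    deriv (deriv f) x = f'' := by
  have hderiv : deriv f =ᶠ[𝓝 x] f' := hf.mono fun _ hy => hy.deriv
  rw [hderiv.deriv_eq, hf'.deriv]

section ParametricIntegral

variable {X : Type*} [MeasurableSpace X] {μ : Measure X} {g w : X → ℝ} {C : ℝ}

theorem hasDerivAt_integral_comp_mul {φ φ' : ℝ → ℝ} {r K K' t₀ : ℝ}
    (hg : AEMeasurable g μ) (hgC : ∀ᵐ x ∂μ, |g x| ≤ C) (hw : Integrable w μ)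
    (hφm : Measurable φ) (hφ'm : Measurable φ')
    (hφ : ∀ s, |s| < r → HasDerivAt φ (φ' s) s)
    (hφK : ∀ s, |s| < r → |φ s| ≤ K) (hφ'K : ∀ s, |s| < r → |φ' s| ≤ K')
    (ht₀ : |t₀| * C < r) :
    HasDerivAt (fun t => ∫ x, φ (t * g x) * w x ∂μ)
      (∫ x, φ' (t₀ * g x) * g x * w x ∂μ) t₀ := by
  set U := {t : ℝ | |t| * C < r}
  have hU : U ∈ 𝓝 t₀ :=
    (isOpen_lt (continuous_abs.mul continuous_const) continuous_const).mem_nhds ht₀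
  have hmeas : ∀ ψ : ℝ → ℝ, Measurable ψ → ∀ t,
      AEStronglyMeasurable (fun x => ψ (t * g x)) μ :=
    fun ψ hψ t => (hψ.comp_aemeasurable (hg.const_mul t)).aestronglyMeasurable
  have hmem : ∀ᵐ x ∂μ, ∀ t ∈ U, |t * g x| < r := by
    filter_upwards [hgC] with x hx t ht
    rw [abs_mul]
    exact (mul_le_mul_of_nonneg_left hx (abs_nonneg t)).trans_lt ht
  refine (hasDerivAt_integral_of_dominated_loc_of_deriv_le (F := fun t x => φ (t * g x) * w x)
    (F' := fun t x => φ' (t * g x) * g x * w x) (bound := fun x => K' * C * ‖w x‖)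
    hU ?_ ?_ ?_ ?_ ?_ ?_).2
  · exact Eventually.of_forall fun t => (hmeas φ hφm t).mul hw.1
  · refine hw.bdd_mul (c := K) (f := fun x => φ (t₀ * g x)) (hmeas φ hφm t₀) ?_
    filter_upwards [hmem] with x hx
    exact hφK _ (hx t₀ ht₀)
  · exact ((hmeas φ' hφ'm t₀).mul hg.aestronglyMeasurable).mul hw.1
  · filter_upwards [hmem, hgC] with x hx hxC t ht
    have hφ'x := hφ'K _ (hx t ht)
    rw [norm_mul, norm_mul, Real.norm_eq_abs, Real.norm_eq_abs]
    gcongr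
    exact (abs_nonneg _).trans hφ'x
  · exact hw.norm.const_mul _
  · filter_upwards [hmem] with x hx t ht
    simpa using ((hφ _ (hx t ht)).comp t ((hasDerivAt_id t).mul_const (g x))).mul_const (w x)

theorem hasDerivAt_integral_log_one_add_mul (hg : AEMeasurable g μ)
    (hgC : ∀ᵐ x ∂μ, |g x| ≤ C) (hw : Integrable w μ) {t : ℝ} (ht : |t| * C < 1 / 2) :
    HasDerivAt (fun t => ∫ x, log (1 + t * g x) * w x ∂μ)
      (∫ x, (1 + t * g x)⁻¹ * g x * w x ∂μ) t :=
  hasDerivAt_integral_comp_mul hg hgC hw (by fun_prop) (by fun_prop)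
    (fun s hs => hasDerivAt_log_one_add (by linarith [neg_abs_le s]))
    (fun _ hs => abs_log_one_add_le_one hs) (fun _ hs => abs_inv_one_add_le_two hs) ht

theorem deriv_deriv_integral_log_one_add_mul (hg : AEMeasurable g μ)
    (hgC : ∀ᵐ x ∂μ, |g x| ≤ C) (hw : Integrable w μ) :
    deriv (deriv fun t => ∫ x, log (1 + t * g x) * w x ∂μ) 0 =
      -∫ x, g x ^ 2 * w x ∂μ := by
  have hnear : ∀ᶠ t in 𝓝 (0 : ℝ), |t| * C < 1 / 2 :=
    (continuous_abs.mul continuous_const).continuousAt.eventually_lt continuousAt_const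
      (by norm_num)
  refine deriv_deriv_eq_of_eventually_hasDerivAt
    (hnear.mono fun t ht => hasDerivAt_integral_log_one_add_mul hg hgC hw ht) ?_
  have hgw : Integrable (fun x => g x * w x) μ :=
    hw.bdd_mul hg.aestronglyMeasurable (by simpa using hgC)
  have hinv := hasDerivAt_integral_comp_mul (t₀ := 0) hg hgC hgw (by fun_prop) (by fun_prop)
    (fun s hs => hasDerivAt_inv_one_add (by linarith [neg_abs_le s]))
    (fun _ hs => abs_inv_one_add_le_two hs) (fun _ hs => abs_neg_inv_one_add_sq_le_four hs)
    (by norm_num)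
  have hvalue :
      ∫ x, -((1 + 0 * g x) ^ 2)⁻¹ * g x * (g x * w x) ∂μ = -∫ x, g x ^ 2 * w x ∂μ := by
    rw [← integral_neg]
    congr 1 with x
    simp only [zero_mul, add_zero, one_pow, inv_one]
    ring
  rw [hvalue] at hinv
  simpa only [mul_assoc] using hinv

end ParametricIntegral

theorem stmt5_general {M : Type*} [TopologicalSpace M] [CompactSpace M]
    [MeasurableSpace M] [BorelSpace M] (lam : Measure M) [IsProbabilityMeasure lam]
    (f : M → ℝ) (hf : Continuous f) (hfpos : ∀ x, 0 < f x)
    (h : M → ℝ) (hh : Continuous h)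
    (C : ℝ) (hbound : ∀ x, |h x / f x| ≤ C) :
    deriv (deriv (fun t : ℝ => -∫ x, Real.log ((f x + t * h x) / f x) * f x ∂lam)) 0
      = ∫ x, (h x / f x) ^ 2 * f x ∂lam := by
  have hg : Continuous fun x => h x / f x := hh.div hf fun x => (hfpos x).ne'
  have hfi : Integrable f lam := hf.integrable_of_hasCompactSupport (.of_compactSpace f)
  have hintegrand : (fun t : ℝ => -∫ x, log ((f x + t * h x) / f x) * f x ∂lam)
      = fun t => -∫ x, log (1 + t * (h x / f x)) * f x ∂lam := by
    funext t
    congr 2 with x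
    rw [add_div, div_self (hfpos x).ne', mul_div_assoc]
  rw [hintegrand, deriv.fun_neg', deriv.fun_neg,
    deriv_deriv_integral_log_one_add_mul hg.aemeasurable (ae_of_all _ hbound) hfi, neg_neg]

/-- The second derivative at t = 0 of t ↦ D_KL(μ ‖ μ + tτ) equals the Fisher metric G_μ(τ,τ). -/
theorem stmt5 {M : Type*} [TopologicalSpace M] [CompactSpace M] [ConnectedSpace M]
    [MeasurableSpace M] [BorelSpace M] (lam : Measure M) [IsProbabilityMeasure lam]
    (f : M → ℝ) (hf : Continuous f) (hfpos : ∀ x, 0 < f x) (hfint : ∫ x, f x ∂lam = 1)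
    (h : M → ℝ) (hh : Continuous h) (hhint : ∫ x, h x ∂lam = 0)
    (C : ℝ) (hbound : ∀ x, |h x / f x| ≤ C) :
    deriv (deriv (fun t : ℝ => -∫ x, Real.log ((f x + t * h x) / f x) * f x ∂lam)) 0
      = ∫ x, (h x / f x) ^ 2 * f x ∂lam :=
  stmt5_general lam f hf hfpos h hh C hbound
end

section
/- For any unit-Fisher-norm tangent vector τ at μ ∈ 𝒫⁺(M), the geodesic μ(t) = (cos(t/2) + sin(t/2)·(dτ/dμ))²·μ leaves 𝒫⁺(M) at t = π: the density of μ(π) = (dτ/dμ)²·μ vanishes at some point of M, so μ(π) ∉ 𝒫⁺(M). -/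
open MeasureTheory

section

variable {X : Type*} [TopologicalSpace X] [CompactSpace X] [MeasurableSpace X]
  [OpensMeasurableSpace X] (μ : Measure X) [IsFiniteMeasure μ]

theorem integral_pos_of_continuous_of_pos [NeZero μ] {g : X → ℝ} (hg : Continuous g)
    (hpos : ∀ x, 0 < g x) : 0 < ∫ x, g x ∂μ := by
  have hint : Integrable g μ :=
    hg.integrable_of_hasCompactSupport (HasCompactSupport.of_compactSpace g)
  have hsupp : Function.support g = Set.univ :=
    Set.eq_univ_of_forall fun x => (hpos x).ne'
  rw [integral_pos_iff_support_of_nonneg (fun x => (hpos x).le) hint, hsupp]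
  exact Measure.measure_univ_pos.mpr (NeZero.ne μ)

theorem exists_eq_zero_of_integral_eq_zero [PreconnectedSpace X] [NeZero μ] {g : X → ℝ}
    (hg : Continuous g) (hint : ∫ x, g x ∂μ = 0) : ∃ x, g x = 0 := by
  have hnonpos : ∃ a, g a ≤ 0 := by
    by_contra! hall
    exact (integral_pos_of_continuous_of_pos μ hg hall).ne' hint
  have hnonneg : ∃ b, 0 ≤ g b := by
    by_contra! hall
    have := integral_pos_of_continuous_of_pos μ (g := fun x => -g x) hg.neg
      fun x => neg_pos.mpr (hall x)
    rw [integral_neg, hint, neg_zero] at this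
    exact this.false
  obtain ⟨a, ha⟩ := hnonpos
  obtain ⟨b, hb⟩ := hnonneg
  exact intermediate_value_univ a b hg ⟨ha, hb⟩

end

theorem stmt7_general {M : Type*} [TopologicalSpace M] [CompactSpace M] [ConnectedSpace M]
    [MeasurableSpace M] [BorelSpace M] (lam : Measure M) [IsProbabilityMeasure lam]
    (f : M → ℝ) (h : M → ℝ) (hh : Continuous h) (hhint : ∫ x, h x ∂lam = 0) :
    (∃ x, (h x / f x) ^ 2 * f x = 0) ∧
    ¬ (∀ x, 0 < (h x / f x) ^ 2 * f x) := by
  obtain ⟨x, hx⟩ := exists_eq_zero_of_integral_eq_zero lam hh hhint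
  have hdensity : (h x / f x) ^ 2 * f x = 0 := by simp [hx]
  exact ⟨⟨x, hdensity⟩, fun hall => (hall x).ne' hdensity⟩

/-- The density (dτ/dμ)²·f of μ(π) vanishes somewhere on M, hence μ(π) ∉ 𝒫⁺(M). -/
theorem stmt7 {M : Type*} [TopologicalSpace M] [CompactSpace M] [ConnectedSpace M]
    [MeasurableSpace M] [BorelSpace M] (lam : Measure M) [IsProbabilityMeasure lam]
    (f : M → ℝ) (hf : Continuous f) (hfpos : ∀ x, 0 < f x) (hfint : ∫ x, f x ∂lam = 1)
    (h : M → ℝ) (hh : Continuous h) (hhint : ∫ x, h x ∂lam = 0)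
    (hnorm : ∫ x, (h x / f x) ^ 2 * f x ∂lam = 1) :
    (∃ x, (h x / f x) ^ 2 * f x = 0) ∧
    ¬ (∀ x, 0 < (h x / f x) ^ 2 * f x) :=
  stmt7_general lam f h hh hhint
end

section
/- With a(t) = sin²((ℓ−t)/2)/sin²(ℓ/2), b(t) = sin²(t/2)/sin²(ℓ/2), c(t) = 2cos(ℓ/2)·sin((ℓ−t)/2)sin(t/2)/sin²(ℓ/2), one has a(t), b(t), c(t) ≥ 0 and a(t) + b(t) + c(t) = 1 for all t ∈ [0,ℓ], where 0 < ℓ < π; moreover the Fisher geodesic from μ to μ₁ satisfies μ(t) = a(t)μ + b(t)μ₁ + c(t)σ(μ,μ₁), so μ(t) lies in the 2-simplex spanned by μ, μ₁ and the normalized geometric mean σ(μ,μ₁), and hence μ(t) ∈ 𝒫⁺(M) for all t ∈ [0,ℓ]. -/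
/-!
Write `u = √(f₁/f)`, `θ = ℓ/2`, `φ = t/2`, so that `cos θ = c` and `σ = u f / cos θ`. By the
subtraction formula the density ratio of the geodesic is
`√(μ(t)/μ) = cos φ + sin φ · (u - cos θ)/sin θ = (sin (θ - φ) + u sin φ)/sin θ`;
squaring and multiplying by `f` gives `a f + b u² f + c(t) σ`. For `t ∈ [0, ℓ]` the weights are
nonnegative, and they sum to `1` by the same formula, so `μ(t)` is a convex combination of three
positive densities.
-/

open MeasureTheory Real

theorem cos_half_of_eq_two_mul_arccos {ℓ c : ℝ} (hℓ : ℓ = 2 * arccos c) (hℓ0 : 0 < ℓ)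
    (hℓ2π : ℓ < 2 * π) : cos (ℓ / 2) = c := by
  have hpos : 0 < arccos c := by linarith
  have hlt : arccos c < π := by linarith
  rw [hℓ, mul_div_cancel_left₀ _ two_ne_zero,
    cos_arccos (arccos_lt_pi.1 hlt).le (arccos_pos.1 hpos).le]

theorem sin_sub_sq_add_sin_sq_add_two_mul_cos_mul_sin_mul_sin (θ φ : ℝ) :
    sin (θ - φ) ^ 2 + sin φ ^ 2 + 2 * cos θ * (sin (θ - φ) * sin φ) = sin θ ^ 2 := by
  rw [sin_sub]
  linear_combination sin θ ^ 2 * sin_sq_add_cos_sq φ - sin φ ^ 2 * sin_sq_add_cos_sq θ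

theorem cos_add_sin_mul_inv_tan_mul {θ : ℝ} (hsin : sin θ ≠ 0) (hcos : cos θ ≠ 0) (φ u : ℝ) :
    cos φ + sin φ * ((tan θ)⁻¹ * (u / cos θ - 1)) = (sin (θ - φ) + u * sin φ) / sin θ := by
  rw [tan_eq_sin_div_cos, sin_sub]
  field_simp
  ring

theorem geodesic_density_eq {θ : ℝ} (hsin : sin θ ≠ 0) (hcos : cos θ ≠ 0) (φ : ℝ)
    {F F₁ : ℝ} (hF : 0 < F) (hF₁ : 0 ≤ F₁) :
    (cos φ + sin φ * ((tan θ)⁻¹ * ((cos θ)⁻¹ * √(F₁ / F) * F - F) / F)) ^ 2 * F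
      = sin (θ - φ) ^ 2 / sin θ ^ 2 * F + sin φ ^ 2 / sin θ ^ 2 * F₁
        + 2 * cos θ * (sin (θ - φ) * sin φ) / sin θ ^ 2 * ((cos θ)⁻¹ * √(F₁ / F) * F) := by
  set u := √(F₁ / F)
  have hF₁u : F₁ = u ^ 2 * F := by
    rw [sq_sqrt (div_nonneg hF₁ hF.le), div_mul_cancel₀ _ hF.ne']
  have hratio : (tan θ)⁻¹ * ((cos θ)⁻¹ * u * F - F) / F = (tan θ)⁻¹ * (u / cos θ - 1) := by
    field_simp
  rw [hratio, cos_add_sin_mul_inv_tan_mul hsin hcos, hF₁u]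
  field_simp
  ring

theorem pos_of_convex_combination {a b c p q r : ℝ} (ha : 0 ≤ a) (hb : 0 ≤ b) (hc : 0 ≤ c)
    (habc : a + b + c = 1) (hp : 0 < p) (hq : 0 < q) (hr : 0 < r) :
    0 < a * p + b * q + c * r := by
  set m := min p (min q r)
  calc 0 < m := lt_min hp (lt_min hq hr)
    _ = a * m + b * m + c * m := by rw [← add_mul, ← add_mul, habc, one_mul]
    _ ≤ a * p + b * q + c * r := by
      gcongr
      · exact min_le_left _ _
      · exact (min_le_right _ _).trans (min_le_left _ _)
      · exact (min_le_right _ _).trans (min_le_right _ _)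

theorem stmt10_general {M : Type*}
    (f f₁ : M → ℝ)
    (hfpos : ∀ x, 0 < f x) (hf₁pos : ∀ x, 0 < f₁ x)
    (c : ℝ)
    (ℓ : ℝ) (hℓ : ℓ = 2 * Real.arccos c) (hℓ0 : 0 < ℓ) (hℓπ : ℓ < Real.pi)
    (s : M → ℝ) (hs : ∀ x, s x = c⁻¹ * Real.sqrt (f₁ x / f x) * f x)
    (tau : M → ℝ) (htau : ∀ x, tau x = (Real.tan (ℓ / 2))⁻¹ * (s x - f x))
    (g : ℝ → M → ℝ)
    (hg : ∀ t x, g t x = (Real.cos (t / 2) + Real.sin (t / 2) * (tau x / f x)) ^ 2 * f x)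
    (a b cc : ℝ → ℝ)
    (ha : ∀ t, a t = Real.sin ((ℓ - t) / 2) ^ 2 / Real.sin (ℓ / 2) ^ 2)
    (hb : ∀ t, b t = Real.sin (t / 2) ^ 2 / Real.sin (ℓ / 2) ^ 2)
    (hcc : ∀ t, cc t = 2 * Real.cos (ℓ / 2) * (Real.sin ((ℓ - t) / 2) * Real.sin (t / 2))
        / Real.sin (ℓ / 2) ^ 2) :
    ∀ t ∈ Set.Icc (0 : ℝ) ℓ,
      0 ≤ a t ∧ 0 ≤ b t ∧ 0 ≤ cc t ∧ a t + b t + cc t = 1 ∧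
      (∀ x, g t x = a t * f x + b t * f₁ x + cc t * s x) ∧
      (∀ x, 0 < g t x) := by
  rintro t ⟨ht0, htℓ⟩
  rw [← cos_half_of_eq_two_mul_arccos hℓ hℓ0 (by linarith [pi_pos])] at hs
  have hsin : 0 < sin (ℓ / 2) := sin_pos_of_pos_of_lt_pi (by linarith) (by linarith)
  have hcos : 0 < cos (ℓ / 2) := cos_pos_of_mem_Ioo ⟨by linarith, by linarith⟩
  have hhalf : (ℓ - t) / 2 = ℓ / 2 - t / 2 := by ring
  have hsin_sub : 0 ≤ sin (ℓ / 2 - t / 2) :=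
    sin_nonneg_of_nonneg_of_le_pi (by linarith) (by linarith)
  have hsin_t : 0 ≤ sin (t / 2) := sin_nonneg_of_nonneg_of_le_pi (by linarith) (by linarith)
  have hat : 0 ≤ a t := by rw [ha]; positivity
  have hbt : 0 ≤ b t := by rw [hb]; positivity
  have hct : 0 ≤ cc t := by rw [hcc, hhalf]; positivity
  have hsum : a t + b t + cc t = 1 := by
    rw [ha, hb, hcc, hhalf, ← add_div, ← add_div,
      sin_sub_sq_add_sin_sq_add_two_mul_cos_mul_sin_mul_sin, div_self (by positivity)]
  have hgeod : ∀ x, g t x = a t * f x + b t * f₁ x + cc t * s x := fun x => by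
    rw [hg, htau, hs, ha, hb, hcc, hhalf]
    exact geodesic_density_eq hsin.ne' hcos.ne' _ (hfpos x) (hf₁pos x).le
  refine ⟨hat, hbt, hct, hsum, hgeod, fun x => ?_⟩
  have hsx : 0 < s x := by
    rw [hs]
    exact mul_pos (mul_pos (inv_pos.2 hcos) (sqrt_pos.2 (div_pos (hf₁pos x) (hfpos x)))) (hfpos x)
  rw [hgeod]
  exact pos_of_convex_combination hat hbt hct hsum (hfpos x) (hf₁pos x) hsx

/-- The Fisher geodesic lies in the 2-simplex spanned by μ, μ₁ and the normalized
geometric mean σ(μ,μ₁): μ(t) = a(t)μ + b(t)μ₁ + c(t)σ(μ,μ₁) with a,b,c ≥ 0 summing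
to 1, hence μ(t) ∈ 𝒫⁺(M) for t ∈ [0,ℓ]. -/
theorem stmt10 {M : Type*} [TopologicalSpace M] [CompactSpace M] [ConnectedSpace M]
    [MeasurableSpace M] [BorelSpace M] (lam : Measure M) [IsProbabilityMeasure lam]
    (f f₁ : M → ℝ) (hf : Continuous f) (hf₁ : Continuous f₁)
    (hfpos : ∀ x, 0 < f x) (hf₁pos : ∀ x, 0 < f₁ x)
    (hfint : ∫ x, f x ∂lam = 1) (hf₁int : ∫ x, f₁ x ∂lam = 1)
    (hne : f ≠ f₁)
    (c : ℝ) (hc : c = ∫ x, Real.sqrt (f x * f₁ x) ∂lam)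
    (ℓ : ℝ) (hℓ : ℓ = 2 * Real.arccos c) (hℓ0 : 0 < ℓ) (hℓπ : ℓ < Real.pi)
    (s : M → ℝ) (hs : ∀ x, s x = c⁻¹ * Real.sqrt (f₁ x / f x) * f x)
    (tau : M → ℝ) (htau : ∀ x, tau x = (Real.tan (ℓ / 2))⁻¹ * (s x - f x))
    (g : ℝ → M → ℝ)
    (hg : ∀ t x, g t x = (Real.cos (t / 2) + Real.sin (t / 2) * (tau x / f x)) ^ 2 * f x)
    (a b cc : ℝ → ℝ)
    (ha : ∀ t, a t = Real.sin ((ℓ - t) / 2) ^ 2 / Real.sin (ℓ / 2) ^ 2)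
    (hb : ∀ t, b t = Real.sin (t / 2) ^ 2 / Real.sin (ℓ / 2) ^ 2)
    (hcc : ∀ t, cc t = 2 * Real.cos (ℓ / 2) * (Real.sin ((ℓ - t) / 2) * Real.sin (t / 2))
        / Real.sin (ℓ / 2) ^ 2) :
    ∀ t ∈ Set.Icc (0 : ℝ) ℓ,
      0 ≤ a t ∧ 0 ≤ b t ∧ 0 ≤ cc t ∧ a t + b t + cc t = 1 ∧
      (∀ x, g t x = a t * f x + b t * f₁ x + cc t * s x) ∧
      (∀ x, 0 < g t x) :=
  stmt10_general f f₁ hfpos hf₁pos c ℓ hℓ hℓ0 hℓπ s hs tau htau g hg a b cc ha hb hcc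
end

section
/- For α ∈ ℝ, the α-connection ∇^{(α)}_τ τ₁ = −((1+α)/2)·((dτ/dμ)(dτ₁/dμ) − G_μ(τ,τ₁))·μ and its dual ∇^{(−α)} satisfy the duality relation with respect to the Fisher metric on constant vector fields: τ(G(τ₁,τ₂)) = G_μ(∇^{(α)}_τ τ₁, τ₂) + G_μ(τ₁, ∇^{(−α)}_τ τ₂), where the left-hand side is the derivative d/dt|_{t=0} G_{μ+tτ}(τ₁,τ₂). -/
/-!
Along the line `μ + tτ` the Fisher metric is `∫ h₁ h₂ / (f + t h) dλ`, whose derivative at `t = 0`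
is `-∫ h h₁ h₂ / f² dλ`; differentiating under the integral is justified because, `M` being
compact, `f + t h > f / 2` uniformly for small `t`. On the other side, `τ₁` and `τ₂` have mean
zero, so the constant term `G_μ(τ, τᵢ)` of each connection integrates to zero against them, and
the two terms are `-(1 ± α) / 2` times that same integral.
-/

open MeasureTheory Filter Topology

theorem integral_connection_mul_div_mul {M : Type*} [MeasurableSpace M] {μ : Measure M}
    {f u b : M → ℝ} (k C : ℝ) (hf : ∀ x, f x ≠ 0) (hub : Integrable (fun x => u x * b x) μ)
    (hb : Integrable b μ) (hb₀ : ∫ x, b x ∂μ = 0) :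
    ∫ x, k * (u x - C) * f x / f x * (b x / f x) * f x ∂μ = k * ∫ x, u x * b x ∂μ := by
  have hpt : ∀ x, k * (u x - C) * f x / f x * (b x / f x) * f x = k * (u x * b x) - k * C * b x :=
    fun x => by have := hf x; field_simp
  simp_rw [hpt]
  rw [integral_sub (hub.const_mul k) (hb.const_mul _), integral_const_mul, integral_const_mul, hb₀,
    mul_zero, sub_zero]

section CompactSpace

variable {M : Type*} [TopologicalSpace M] [CompactSpace M]

theorem Continuous.integrable_of_compactSpace [MeasurableSpace M] [OpensMeasurableSpace M]
    {μ : Measure M} [IsFiniteMeasure μ] {g : M → ℝ} (hg : Continuous g) : Integrable g μ :=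
  hg.integrable_of_hasCompactSupport (.of_compactSpace g)

theorem eventually_forall_half_lt_add_mul {f h : M → ℝ} (hf : Continuous f) (hh : Continuous h)
    (hfpos : ∀ x, 0 < f x) : ∀ᶠ t in 𝓝 (0 : ℝ), ∀ x, f x / 2 < f x + t * h x := by
  have hopen : IsOpen {p : ℝ × M | f p.2 / 2 < f p.2 + p.1 * h p.2} :=
    isOpen_lt (by fun_prop) (by fun_prop)
  simpa using isCompact_univ.eventually_forall_of_forall_eventually (x₀ := (0 : ℝ))
    (P := fun t x => f x / 2 < f x + t * h x) fun x _ =>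
      hopen.mem_nhds (by simpa using half_lt_self (hfpos x))

theorem hasDerivAt_integral_div_add_mul [MeasurableSpace M] [OpensMeasurableSpace M]
    {μ : Measure M} [IsFiniteMeasure μ] {a f h : M → ℝ} (ha : Continuous a) (hf : Continuous f)
    (hh : Continuous h) (hfpos : ∀ x, 0 < f x) :
    HasDerivAt (fun t => ∫ x, a x / (f x + t * h x) ∂μ) (-∫ x, a x * h x / f x ^ 2 ∂μ) 0 := by
  have hs := eventually_forall_half_lt_add_mul hf hh hfpos
  have hpos : ∀ t, (∀ x, f x / 2 < f x + t * h x) → ∀ x, 0 < f x + t * h x :=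
    fun t ht x => (half_pos (hfpos x)).trans (ht x)
  have hF_cont : ∀ t, (∀ x, f x / 2 < f x + t * h x) →
      Continuous fun x => a x / (f x + t * h x) :=
    fun t ht => ha.div (by fun_prop) fun x => (hpos t ht x).ne'
  have hF'_cont : Continuous fun x => -(a x * h x) / (f x + 0 * h x) ^ 2 :=
    (ha.mul hh).neg.div (by fun_prop) fun x => pow_ne_zero 2 (hpos 0 hs.self_of_nhds x).ne'
  have hbound : ∀ x, ∀ t, (∀ x, f x / 2 < f x + t * h x) →
      ‖-(a x * h x) / (f x + t * h x) ^ 2‖ ≤ |a x * h x| / (f x / 2) ^ 2 := by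
    intro x t ht
    rw [Real.norm_eq_abs, abs_div, abs_neg, abs_of_pos (pow_pos (hpos t ht x) 2)]
    exact div_le_div_of_nonneg_left (abs_nonneg _) (pow_pos (half_pos (hfpos x)) 2)
      (pow_le_pow_left₀ (half_pos (hfpos x)).le (ht x).le 2)
  have hbound_int : Integrable (fun x => |a x * h x| / (f x / 2) ^ 2) μ :=
    ((ha.mul hh).abs.div (by fun_prop) fun x =>
      (pow_pos (half_pos (hfpos x)) 2).ne').integrable_of_compactSpace
  have hderiv : ∀ x t, (∀ x, f x / 2 < f x + t * h x) →
      HasDerivAt (fun s => a x / (f x + s * h x)) (-(a x * h x) / (f x + t * h x) ^ 2) t := by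
    intro x t ht
    have hlin : HasDerivAt (fun s => f x + s * h x) (h x) t := by
      simpa using ((hasDerivAt_id t).mul_const (h x)).const_add (f x)
    have := (hasDerivAt_const t (a x)).div hlin (hpos t ht x).ne'
    rwa [zero_mul, zero_sub] at this
  have key := hasDerivAt_integral_of_dominated_loc_of_deriv_le (μ := μ) hs
    (hs.mono fun t ht => (hF_cont t ht).aestronglyMeasurable)
    (hF_cont 0 hs.self_of_nhds).integrable_of_compactSpace hF'_cont.aestronglyMeasurable
    (ae_of_all _ fun x t ht => hbound x t ht) hbound_int
    (ae_of_all _ fun x t ht => hderiv x t ht)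
  simpa [neg_div, integral_neg] using key.2

end CompactSpace

theorem stmt13_general {M : Type*} [TopologicalSpace M] [CompactSpace M]
    [MeasurableSpace M] [BorelSpace M] (lam : Measure M) [IsProbabilityMeasure lam]
    (f : M → ℝ) (hf : Continuous f) (hfpos : ∀ x, 0 < f x)
    (h h₁ h₂ : M → ℝ) (hh : Continuous h) (hh₁ : Continuous h₁) (hh₂ : Continuous h₂)
    (hh₁int : ∫ x, h₁ x ∂lam = 0) (hh₂int : ∫ x, h₂ x ∂lam = 0)
    (α : ℝ)
    (Gm : (M → ℝ) → (M → ℝ) → ℝ)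
    (hGm : ∀ a b : M → ℝ, Gm a b = ∫ x, (a x / f x) * (b x / f x) * f x ∂lam)
    (nabP nabM : M → ℝ)
    (hnabP : ∀ x, nabP x = -((1 + α) / 2) * ((h x / f x) * (h₁ x / f x) - Gm h h₁) * f x)
    (hnabM : ∀ x, nabM x = -((1 + (-α)) / 2) * ((h x / f x) * (h₂ x / f x) - Gm h h₂) * f x) :
    deriv (fun t : ℝ =>
        ∫ x, (h₁ x / (f x + t * h x)) * (h₂ x / (f x + t * h x)) * (f x + t * h x) ∂lam) 0
      = Gm nabP h₂ + Gm h₁ nabM := by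
  have hf₀ : ∀ x, f x ≠ 0 := fun x => (hfpos x).ne'
  have hGm_comm : ∀ a b, Gm a b = Gm b a := fun a b => by simp only [hGm, mul_comm (a _ / f _)]
  have hline : (fun t : ℝ =>
      ∫ x, (h₁ x / (f x + t * h x)) * (h₂ x / (f x + t * h x)) * (f x + t * h x) ∂lam)
      =ᶠ[𝓝 0] fun t => ∫ x, h₁ x * h₂ x / (f x + t * h x) ∂lam := by
    filter_upwards [eventually_forall_half_lt_add_mul hf hh hfpos] with t ht
    refine integral_congr_ae (ae_of_all _ fun x => ?_)
    have := ((half_pos (hfpos x)).trans (ht x)).ne'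
    field_simp
  have hcubic : Integrable (fun x => h₁ x * h₂ x * h x / f x ^ 2) lam :=
    ((hh₁.mul hh₂).mul hh |>.div (hf.pow 2) fun x => pow_ne_zero 2 (hf₀ x))
      |>.integrable_of_compactSpace
  have hP : ∀ x, h x / f x * (h₁ x / f x) * h₂ x = h₁ x * h₂ x * h x / f x ^ 2 := fun x => by ring
  have hM : ∀ x, h x / f x * (h₂ x / f x) * h₁ x = h₁ x * h₂ x * h x / f x ^ 2 := fun x => by ring
  rw [hline.deriv_eq, (hasDerivAt_integral_div_add_mul (a := fun x => h₁ x * h₂ x)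
    (hh₁.mul hh₂) hf hh hfpos).deriv, hGm_comm h₁, hGm, hGm]
  simp_rw [hnabP, hnabM]
  rw [integral_connection_mul_div_mul _ _ hf₀ ?_ hh₂.integrable_of_compactSpace hh₂int,
    integral_connection_mul_div_mul _ _ hf₀ ?_ hh₁.integrable_of_compactSpace hh₁int]
  · simp_rw [hP, hM]
    ring
  all_goals simpa only [hP, hM] using hcubic

/-- Duality of the α-connections ∇^{(α)}, ∇^{(−α)} with respect to the Fisher metric on
constant vector fields: τ G(τ₁,τ₂) = G_μ(∇^{(α)}_τ τ₁, τ₂) + G_μ(τ₁, ∇^{(−α)}_τ τ₂). -/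
theorem stmt13 {M : Type*} [TopologicalSpace M] [CompactSpace M] [ConnectedSpace M]
    [MeasurableSpace M] [BorelSpace M] (lam : Measure M) [IsProbabilityMeasure lam]
    (f : M → ℝ) (hf : Continuous f) (hfpos : ∀ x, 0 < f x) (hfint : ∫ x, f x ∂lam = 1)
    (h h₁ h₂ : M → ℝ) (hh : Continuous h) (hh₁ : Continuous h₁) (hh₂ : Continuous h₂)
    (hhint : ∫ x, h x ∂lam = 0) (hh₁int : ∫ x, h₁ x ∂lam = 0) (hh₂int : ∫ x, h₂ x ∂lam = 0)
    (c : ℝ) (hc : c < 1) (hbound : ∀ x, |h x / f x| ≤ c)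
    (α : ℝ)
    (Gm : (M → ℝ) → (M → ℝ) → ℝ)
    (hGm : ∀ a b : M → ℝ, Gm a b = ∫ x, (a x / f x) * (b x / f x) * f x ∂lam)
    (nabP nabM : M → ℝ)
    (hnabP : ∀ x, nabP x = -((1 + α) / 2) * ((h x / f x) * (h₁ x / f x) - Gm h h₁) * f x)
    (hnabM : ∀ x, nabM x = -((1 + (-α)) / 2) * ((h x / f x) * (h₂ x / f x) - Gm h h₂) * f x) :
    deriv (fun t : ℝ =>
        ∫ x, (h₁ x / (f x + t * h x)) * (h₂ x / (f x + t * h x)) * (f x + t * h x) ∂lam) 0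
      = Gm nabP h₂ + Gm h₁ nabM :=
  stmt13_general lam f hf hfpos h h₁ h₂ hh hh₁ hh₂ hh₁int hh₂int α Gm hGm nabP nabM hnabP hnabM
end

section
/- The Fisher geodesic segment of Theorem on unique geodesics joining μ to μ₁ has midpoint μ(ℓ/2) equal to the normalized 1/2-power mean of μ and μ₁: the density of μ(ℓ/2) is proportional to (√f + √f₁)², i.e., μ(ℓ/2) = ((√f + √f₁)² / ∫_M (√f + √f₁)² dλ)·λ. -/
/-!
At the midpoint `t = ℓ/2` both `sin ((ℓ - t)/2)` and `sin (t/2)` equal `sin (ℓ/4)`, and with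
`cos (ℓ/2) = c` the half-angle formulas give `a = b = 1 / (2 (1 + c))` and `cc = c / (1 + c)`.
Since `s = c⁻¹ √f √f₁`, the density is `(f + f₁ + 2 √f √f₁) / (2 + 2c) = (√f + √f₁)² / (2 + 2c)`,
and `2 + 2c` is exactly `∫ (√f + √f₁)²` because `f`, `f₁` have mass one and `∫ √(f f₁) = c`.
-/

open MeasureTheory Real

lemma Real.sin_sq_half_div_sin_sq {θ : ℝ} (h : sin θ ≠ 0) :
    sin (θ / 2) ^ 2 / sin θ ^ 2 = 1 / (2 * (1 + cos θ)) := by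
  have hsin : sin θ ^ 2 = (1 - cos θ) * (1 + cos θ) := by rw [sin_sq]; ring
  have hhalf : sin (θ / 2) ^ 2 = (1 - cos θ) / 2 := by
    rw [sin_sq_eq_half_sub, mul_div_cancel₀ θ two_ne_zero]; ring
  have h1 : 1 - cos θ ≠ 0 := fun h0 => h (by simpa [h0] using hsin)
  have h2 : 1 + cos θ ≠ 0 := fun h0 => h (by simpa [h0] using hsin)
  rw [hsin, hhalf]
  field_simp

lemma Real.sqrt_div_mul_self {x y : ℝ} (hx : 0 ≤ x) : √(y / x) * x = √x * √y := by
  rcases hx.eq_or_lt with rfl | hx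
  · simp
  · rw [sqrt_div' _ hx.le, div_mul_eq_mul_div, mul_div_assoc, div_sqrt, mul_comm]

lemma MeasureTheory.integral_sqrt_add_sqrt_sq {α : Type*} [MeasurableSpace α] {μ : Measure α}
    {f g : α → ℝ} (hf : 0 ≤ f) (hg : 0 ≤ g) (hfi : Integrable f μ) (hgi : Integrable g μ)
    (hfgi : Integrable (fun x => √(f x * g x)) μ) :
    ∫ x, (√(f x) + √(g x)) ^ 2 ∂μ = ∫ x, f x ∂μ + ∫ x, g x ∂μ + 2 * ∫ x, √(f x * g x) ∂μ := by
  have hsq : ∀ x, (√(f x) + √(g x)) ^ 2 = f x + g x + 2 * √(f x * g x) := fun x => by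
    rw [add_sq, sq_sqrt (hf x), sq_sqrt (hg x), sqrt_mul (hf x)]; ring
  simp_rw [hsq]
  rw [integral_add (f := fun x => f x + g x) (hfi.add hgi) (hfgi.const_mul 2), integral_add hfi hgi,
    integral_const_mul]

theorem stmt15_general {M : Type*}
    [MeasurableSpace M] (lam : Measure M)
    (f f₁ : M → ℝ)
    (hfpos : ∀ x, 0 < f x) (hf₁pos : ∀ x, 0 < f₁ x)
    (hfint : ∫ x, f x ∂lam = 1) (hf₁int : ∫ x, f₁ x ∂lam = 1)
    (c : ℝ) (hc : c = ∫ x, Real.sqrt (f x * f₁ x) ∂lam)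
    (ℓ : ℝ) (hℓ : ℓ = 2 * Real.arccos c) (hℓ0 : 0 < ℓ) (hℓπ : ℓ < Real.pi)
    (s : M → ℝ) (hs : ∀ x, s x = c⁻¹ * Real.sqrt (f₁ x / f x) * f x)
    (a b cc : ℝ → ℝ)
    (ha : ∀ t, a t = Real.sin ((ℓ - t) / 2) ^ 2 / Real.sin (ℓ / 2) ^ 2)
    (hb : ∀ t, b t = Real.sin (t / 2) ^ 2 / Real.sin (ℓ / 2) ^ 2)
    (hcc : ∀ t, cc t = 2 * Real.cos (ℓ / 2) * (Real.sin ((ℓ - t) / 2) * Real.sin (t / 2))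
        / Real.sin (ℓ / 2) ^ 2)
    (g : ℝ → M → ℝ)
    (hg : ∀ t x, g t x = a t * f x + b t * f₁ x + cc t * s x) :
    ∀ x, g (ℓ / 2) x
        = (Real.sqrt (f x) + Real.sqrt (f₁ x)) ^ 2
          / ∫ y, (Real.sqrt (f y) + Real.sqrt (f₁ y)) ^ 2 ∂lam := by
  intro x
  have harccos : ℓ / 2 = arccos c := by rw [hℓ]; ring
  have hc0 : 0 < c := arccos_lt_pi_div_two.mp (by linarith)
  have hc1 : c < 1 := arccos_pos.mp (by linarith)
  have hcos : cos (ℓ / 2) = c := by rw [harccos, cos_arccos (by linarith) hc1.le]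
  have hsin : sin (ℓ / 2) ≠ 0 := (sin_pos_of_pos_of_lt_pi (by linarith) (by linarith)).ne'
  have hcoef : sin (ℓ / 2 / 2) ^ 2 / sin (ℓ / 2) ^ 2 = 1 / (2 * (1 + c)) := by
    rw [sin_sq_half_div_sin_sq hsin, hcos]
  have hmass : ∫ y, (√(f y) + √(f₁ y)) ^ 2 ∂lam = 2 + 2 * c := by
    rw [integral_sqrt_add_sqrt_sq (fun y => (hfpos y).le) (fun y => (hf₁pos y).le)
      (.of_integral_ne_zero (by simp [hfint])) (.of_integral_ne_zero (by simp [hf₁int]))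
      (.of_integral_ne_zero (hc ▸ hc0.ne')), hfint, hf₁int, ← hc]
    ring
  have hmid : (ℓ - ℓ / 2) / 2 = ℓ / 2 / 2 := by ring
  rw [hg, ha, hb, hcc, hs, hmass, hmid, hcos, mul_assoc c⁻¹, sqrt_div_mul_self (hfpos x).le,
    mul_div_assoc, ← sq, hcoef, add_sq, sq_sqrt (hfpos x).le, sq_sqrt (hf₁pos x).le]
  field_simp
  ring

/-- The midpoint μ(ℓ/2) of the Fisher geodesic is the normalized 1/2-power mean:
its density is (√f + √f₁)² / ∫ (√f + √f₁)² dλ. -/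
theorem stmt15 {M : Type*} [TopologicalSpace M] [CompactSpace M] [ConnectedSpace M]
    [MeasurableSpace M] [BorelSpace M] (lam : Measure M) [IsProbabilityMeasure lam]
    (f f₁ : M → ℝ) (hf : Continuous f) (hf₁ : Continuous f₁)
    (hfpos : ∀ x, 0 < f x) (hf₁pos : ∀ x, 0 < f₁ x)
    (hfint : ∫ x, f x ∂lam = 1) (hf₁int : ∫ x, f₁ x ∂lam = 1)
    (hne : f ≠ f₁)
    (c : ℝ) (hc : c = ∫ x, Real.sqrt (f x * f₁ x) ∂lam)
    (ℓ : ℝ) (hℓ : ℓ = 2 * Real.arccos c) (hℓ0 : 0 < ℓ) (hℓπ : ℓ < Real.pi)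
    (s : M → ℝ) (hs : ∀ x, s x = c⁻¹ * Real.sqrt (f₁ x / f x) * f x)
    (a b cc : ℝ → ℝ)
    (ha : ∀ t, a t = Real.sin ((ℓ - t) / 2) ^ 2 / Real.sin (ℓ / 2) ^ 2)
    (hb : ∀ t, b t = Real.sin (t / 2) ^ 2 / Real.sin (ℓ / 2) ^ 2)
    (hcc : ∀ t, cc t = 2 * Real.cos (ℓ / 2) * (Real.sin ((ℓ - t) / 2) * Real.sin (t / 2))
        / Real.sin (ℓ / 2) ^ 2)
    (g : ℝ → M → ℝ)
    (hg : ∀ t x, g t x = a t * f x + b t * f₁ x + cc t * s x) :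
    ∀ x, g (ℓ / 2) x
        = (Real.sqrt (f x) + Real.sqrt (f₁ x)) ^ 2
          / ∫ y, (Real.sqrt (f y) + Real.sqrt (f₁ y)) ^ 2 ∂lam :=
  stmt15_general lam f f₁ hfpos hf₁pos hfint hf₁int c hc ℓ hℓ hℓ0 hℓπ s hs a b cc ha hb hcc g hg
end
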